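/- The tensor product of two separable S-rings over finite abelian groups is separable: if A₁ over G₁ and A₂ over G₂ are each separable with respect to the class of abelian groups, then A₁ ⊗ A₂ over G₁ × G₂ is separable with respect to the class of abelian groups. -/

import Mathlib

open scoped BigOperators

/-- The indicator element `X̲ = Σ_{x∈X} x` of a finset in the integral group ring `ℤG`. -/
noncomputable def grpInd {G : Type*} [Group G] (X : Finset G) : MonoidAlgebra ℤ G :=
  ∑ x ∈ X, MonoidAlgebra.single x (1 : ℤ)

/-- A Schur ring over a finite group `G`: a partition of `G` containing `{1}`,
closed under inverses, whose indicator elements span a subring of `ℤG`. -/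
structure SchurRing (G : Type*) [Group G] [Fintype G] [DecidableEq G] where
  parts : Finset (Finset G)
  nonempty_mem : ∀ X ∈ parts, X.Nonempty
  cover : ∀ g : G, ∃ X ∈ parts, g ∈ X
  pairwise_disjoint : ∀ X ∈ parts, ∀ Y ∈ parts, X ≠ Y → Disjoint X Y
  one_mem : ({1} : Finset G) ∈ parts
  inv_mem : ∀ X ∈ parts, X.image (·⁻¹) ∈ parts
  mul_mem : ∀ X ∈ parts, ∀ Y ∈ parts, ∃ c : Finset G → ℤ,
    grpInd X * grpInd Y = ∑ Z ∈ parts, c Z • grpInd Z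

namespace SchurRing

variable {G : Type*} [Group G] [Fintype G] [DecidableEq G]

/-- The underlying `ℤ`-module of the Schur ring: the span of the indicators of basic sets. -/
noncomputable def carrier (A : SchurRing G) : Submodule ℤ (MonoidAlgebra ℤ G) :=
  Submodule.span ℤ {v | ∃ X ∈ A.parts, v = grpInd X}

/-- `X ⊆ G` is an `A`-set if its indicator lies in `A`. -/
def IsASet (A : SchurRing G) (X : Finset G) : Prop := grpInd X ∈ A.carrier

/-- `A` is a subring of `B` (as S-rings over the same group). -/
def le (A B : SchurRing G) : Prop := ∀ X ∈ A.parts, grpInd X ∈ B.carrier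

end SchurRing

/-- An algebraic isomorphism of Schur rings: a bijection of basic sets preserving all
structure constants (the structure constant `c^Z_{X,Y}` is the coefficient of the
product `X̲·Y̲` at any `z ∈ Z`). -/
def IsAlgIso {G G' : Type*} [Group G] [Fintype G] [DecidableEq G]
    [Group G'] [Fintype G'] [DecidableEq G']
    (A : SchurRing G) (A' : SchurRing G') (φ : Finset G → Finset G') : Prop :=
  Set.BijOn φ ↑A.parts ↑A'.parts ∧
  ∀ X ∈ A.parts, ∀ Y ∈ A.parts, ∀ Z ∈ A.parts, ∀ z ∈ Z, ∀ z' ∈ φ Z,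
    (grpInd X * grpInd Y).coeff z = (grpInd (φ X) * grpInd (φ Y)).coeff z'

/-- A combinatorial isomorphism of Schur rings: a bijection `G → G'` mapping basic sets to
basic sets and inducing a Cayley graph isomorphism on each basic set. -/
def IsCombIso {G G' : Type*} [Group G] [Fintype G] [DecidableEq G]
    [Group G'] [Fintype G'] [DecidableEq G']
    (A : SchurRing G) (A' : SchurRing G') (f : G → G') : Prop :=
  Function.Bijective f ∧
  ∀ X ∈ A.parts, X.image f ∈ A'.parts ∧
    ∀ g h : G, h * g⁻¹ ∈ X ↔ f h * (f g)⁻¹ ∈ X.image f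

/-- An automorphism of a Schur ring: a permutation of `G` preserving the edge set of
`Cay(G,X)` for every basic set `X`. -/
def IsSchurAut {G : Type*} [Group G] [Fintype G] [DecidableEq G]
    (A : SchurRing G) (f : G → G) : Prop :=
  Function.Bijective f ∧ ∀ X ∈ A.parts, ∀ g h : G, h * g⁻¹ ∈ X ↔ f h * (f g)⁻¹ ∈ X

/-- Separability with respect to the class of (finite) abelian groups. -/
def SchurRing.IsSeparableAbelian {G : Type} [Group G] [Fintype G] [DecidableEq G]
    (A : SchurRing G) : Prop :=
  ∀ (G' : Type) [CommGroup G'] [Fintype G'] [DecidableEq G'],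
    ∀ (A' : SchurRing G') (φ : Finset G → Finset G'),
    IsAlgIso A A' φ →
    ∃ f : G → G', IsCombIso A A' f ∧ ∀ X ∈ A.parts, φ X = X.image f

/-!
The basic sets `X₁ × 1` and `1 × X₂` of `A₁ ⊗ A₂` form copies of `A₁` and `A₂` on the subgroups
`G₁ × 1` and `1 × G₂`. An algebraic isomorphism `φ` onto an S-ring `A'` over an abelian group `G'`
sends the basic sets of the `i`-th copy to basic sets covering a subgroup `Kᵢ ≤ G'`, and `A'`
restricts to an S-ring over `Kᵢ` algebraically isomorphic to `Aᵢ`. Separability of `Aᵢ` yields a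
combinatorial isomorphism `fᵢ : Gᵢ → Kᵢ` inducing `φ` on that copy. As `G₁ × 1` and `1 × G₂` meet
trivially, so do `K₁` and `K₂`; hence `(a, b) ↦ f₁ a * f₂ b` is injective, and bijective since
`|G'| = |G₁ × G₂|`. From `X̲₁×1 · 1×X̲₂ = X̲₁×X̲₂` we get `φ (X₁ × X₂) = f₁ X₁ * f₂ X₂`, and the
uniqueness of factorisations in `K₁ K₂` transfers the Cayley-graph condition from the factors.
-/

open scoped Pointwise

section GrpInd

variable {G H : Type*} [Group G] [Group H] [DecidableEq H]

lemma grpInd_one : grpInd ({1} : Finset G) = 1 := by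
  simp [grpInd, MonoidAlgebra.one_def]

lemma grpInd_image {ι : G →* H} (hι : Function.Injective ι) (X : Finset G) :
    grpInd (X.image ι) = MonoidAlgebra.mapDomainRingHom ℤ ι (grpInd X) := by
  simp [grpInd, map_sum, Finset.sum_image fun _ _ _ _ h => hι h]

lemma coeff_grpInd_image_mul {ι : G →* H} (hι : Function.Injective ι) (X Y : Finset G)
    (z : G) :
    (grpInd (X.image ι) * grpInd (Y.image ι)).coeff (ι z) = (grpInd X * grpInd Y).coeff z := by
  rw [grpInd_image hι, grpInd_image hι, ← map_mul]
  simp [Finsupp.mapDomain_apply hι]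

variable [DecidableEq G]

lemma image_inv_image (ι : G →* H) (X : Finset G) :
    (X.image (·⁻¹)).image ι = (X.image ι).image (·⁻¹) := by
  simp [Finset.image_image, Function.comp_def]

lemma coeff_grpInd_subtype_mul {K : Subgroup G} [DecidablePred (· ∈ K)] {X Y : Finset G}
    (hX : ∀ x ∈ X, x ∈ K) (hY : ∀ y ∈ Y, y ∈ K) (k : K) :
    (grpInd (X.subtype (· ∈ K)) * grpInd (Y.subtype (· ∈ K))).coeff k =
      (grpInd X * grpInd Y).coeff k := by
  have himage : ∀ {S : Finset G}, (∀ s ∈ S, s ∈ K) → (S.subtype (· ∈ K)).image K.subtype = S :=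
    fun hS => (Finset.map_eq_image _ _).symm.trans (Finset.subtype_map_of_mem hS)
  conv_rhs => rw [← himage hX, ← himage hY]
  exact (coeff_grpInd_image_mul K.subtype_injective _ _ k).symm

lemma coeff_grpInd (X : Finset G) (g : G) :
    (grpInd X).coeff g = if g ∈ X then 1 else 0 := by
  simp [grpInd, Finsupp.single_apply]

lemma coeff_grpInd_mul (X Y : Finset G) (g : G) :
    (grpInd X * grpInd Y).coeff g = ∑ x ∈ X, ∑ y ∈ Y, if x * y = g then 1 else 0 := by
  simp [grpInd, Finset.sum_mul_sum, MonoidAlgebra.single_mul_single, Finsupp.single_apply]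

lemma coeff_grpInd_mul_nonneg (X Y : Finset G) (g : G) :
    0 ≤ (grpInd X * grpInd Y).coeff g := by
  rw [coeff_grpInd_mul]
  exact Finset.sum_nonneg fun _ _ => Finset.sum_nonneg fun _ _ => by split <;> norm_num

lemma coeff_grpInd_mul_pos_iff (X Y : Finset G) (g : G) :
    0 < (grpInd X * grpInd Y).coeff g ↔ g ∈ X * Y := by
  rw [coeff_grpInd_mul, Finset.mem_mul]
  constructor
  · intro h
    by_contra! hg
    refine h.ne' (Finset.sum_eq_zero fun x hx => Finset.sum_eq_zero fun y hy => ?_)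
    simp [hg x hx y hy]
  · rintro ⟨x, hx, y, hy, rfl⟩
    refine Finset.sum_pos' (fun _ _ => Finset.sum_nonneg fun _ _ => by split <;> norm_num)
      ⟨x, hx, Finset.sum_pos' (fun _ _ => by split <;> norm_num) ⟨y, hy, by simp⟩⟩

lemma coeff_grpInd_mul_ne_zero_iff (X Y : Finset G) (g : G) :
    (grpInd X * grpInd Y).coeff g ≠ 0 ↔ g ∈ X * Y := by
  rw [← coeff_grpInd_mul_pos_iff, (coeff_grpInd_mul_nonneg X Y g).lt_iff_ne']

lemma coeff_grpInd_mul_image_inv_one (X : Finset G) :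
    (grpInd X * grpInd (X.image (·⁻¹))).coeff 1 = X.card := by
  rw [coeff_grpInd_mul]
  have hx : ∀ x ∈ X, ∑ y ∈ X.image (·⁻¹), (if x * y = 1 then (1 : ℤ) else 0) = 1 := by
    intro x hx
    simp_rw [mul_eq_one_iff_eq_inv', Finset.sum_ite_eq']
    simp [hx]
  rw [Finset.sum_congr rfl hx]
  simp

lemma sum_coeff_grpInd [Fintype G] (X : Finset G) : ∑ g, (grpInd X).coeff g = X.card := by
  simp [coeff_grpInd]

lemma sum_coeff_grpInd_mul [Fintype G] (X Y : Finset G) :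
    ∑ g, (grpInd X * grpInd Y).coeff g = X.card * Y.card := by
  simp_rw [coeff_grpInd_mul]
  rw [Finset.sum_comm, Finset.sum_congr rfl fun x _ => Finset.sum_comm]
  simp

lemma mul_eq_of_grpInd_mul_eq {S T W : Finset G} (h : grpInd S * grpInd T = grpInd W) :
    S * T = W := by
  ext g
  rw [← coeff_grpInd_mul_ne_zero_iff, h, coeff_grpInd]
  simp

lemma eq_one_of_grpInd_mul_self [Fintype G] {S : Finset G} (hS : S.Nonempty)
    (h : grpInd S * grpInd S = grpInd S) : S = {1} := by
  have hcard : S.card * S.card = S.card := by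
    exact_mod_cast (sum_coeff_grpInd_mul S S).symm.trans (h ▸ sum_coeff_grpInd S)
  obtain ⟨s, rfl⟩ := Finset.card_eq_one.mp
    (Nat.eq_of_mul_eq_mul_right hS.card_pos (hcard.trans (one_mul _).symm))
  have hss := mul_eq_of_grpInd_mul_eq h
  rw [Finset.singleton_mul_singleton, Finset.singleton_inj, mul_eq_left] at hss
  rw [hss]

end GrpInd

section Disjoint

variable {G : Type*} [Group G] {K₁ K₂ : Subgroup G}

lemma mul_eq_mul_iff_of_disjoint (hK : Disjoint K₁ K₂) {a b c d : G} (ha : a ∈ K₁)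
    (hb : b ∈ K₂) (hc : c ∈ K₁) (hd : d ∈ K₂) : a * b = c * d ↔ a = c ∧ b = d := by
  refine ⟨fun h => ?_, fun ⟨hac, hbd⟩ => hac ▸ hbd ▸ rfl⟩
  simpa using Subgroup.mul_injective_of_disjoint hK
    (a₁ := (⟨a, ha⟩, ⟨b, hb⟩)) (a₂ := (⟨c, hc⟩, ⟨d, hd⟩)) h

lemma mem_mul_iff_of_disjoint [DecidableEq G] (hK : Disjoint K₁ K₂) {S T : Finset G}
    (hS : ∀ s ∈ S, s ∈ K₁) (hT : ∀ t ∈ T, t ∈ K₂) {u v : G} (hu : u ∈ K₁) (hv : v ∈ K₂) :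
    u * v ∈ S * T ↔ u ∈ S ∧ v ∈ T := by
  refine ⟨fun huv => ?_, fun ⟨huS, hvT⟩ => Finset.mul_mem_mul huS hvT⟩
  obtain ⟨s, hs, t, ht, hst⟩ := Finset.mem_mul.mp huv
  obtain ⟨rfl, rfl⟩ := (mul_eq_mul_iff_of_disjoint hK (hS s hs) (hT t ht) hu hv).mp hst
  exact ⟨hs, ht⟩

lemma injective_mul_of_disjoint {G₁ G₂ : Type*} (hK : Disjoint K₁ K₂) {f₁ : G₁ → G}
    {f₂ : G₂ → G} (hf₁ : Function.Injective f₁) (hf₂ : Function.Injective f₂)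
    (hK₁ : ∀ a, f₁ a ∈ K₁) (hK₂ : ∀ a, f₂ a ∈ K₂) :
    Function.Injective fun p : G₁ × G₂ => f₁ p.1 * f₂ p.2 := fun _ _ hpq =>
  have h := (mul_eq_mul_iff_of_disjoint hK (hK₁ _) (hK₂ _) (hK₁ _) (hK₂ _)).mp hpq
  Prod.ext (hf₁ h.1) (hf₂ h.2)

end Disjoint

lemma image_product_mul {G₁ G₂ G' : Type*} [Mul G'] [DecidableEq G'] (f₁ : G₁ → G')
    (f₂ : G₂ → G') (X₁ : Finset G₁) (X₂ : Finset G₂) :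
    (X₁ ×ˢ X₂).image (fun p => f₁ p.1 * f₂ p.2) = X₁.image f₁ * X₂.image f₂ := by
  ext
  simp [Finset.mem_mul, and_assoc]

lemma mul_inv_mem_product_iff {G₁ G₂ G' : Type*} [Group G₁] [Group G₂] [CommGroup G']
    [DecidableEq G'] {K₁ K₂ : Subgroup G'} (hK : Disjoint K₁ K₂) {f₁ : G₁ → G'}
    {f₂ : G₂ → G'} (hf₁ : ∀ a, f₁ a ∈ K₁) (hf₂ : ∀ a, f₂ a ∈ K₂) {X₁ : Finset G₁}
    {X₂ : Finset G₂} (hX₁ : ∀ g h, h * g⁻¹ ∈ X₁ ↔ f₁ h * (f₁ g)⁻¹ ∈ X₁.image f₁)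
    (hX₂ : ∀ g h, h * g⁻¹ ∈ X₂ ↔ f₂ h * (f₂ g)⁻¹ ∈ X₂.image f₂) (g h : G₁ × G₂) :
    h * g⁻¹ ∈ X₁ ×ˢ X₂ ↔
      f₁ h.1 * f₂ h.2 * (f₁ g.1 * f₂ g.2)⁻¹ ∈ X₁.image f₁ * X₂.image f₂ := by
  rw [mul_inv, mul_mul_mul_comm, mem_mul_iff_of_disjoint hK
    (Finset.forall_mem_image.mpr fun a _ => hf₁ a)
    (Finset.forall_mem_image.mpr fun a _ => hf₂ a)
    (K₁.mul_mem (hf₁ _) (K₁.inv_mem (hf₁ _))) (K₂.mul_mem (hf₂ _) (K₂.inv_mem (hf₂ _))),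
    ← hX₁, ← hX₂, Finset.mem_product]
  rfl

section Product

variable {G₁ G₂ : Type*} [Group G₁] [Group G₂]

lemma image_inl [DecidableEq G₁] [DecidableEq G₂] (X : Finset G₁) :
    X.image (MonoidHom.inl G₁ G₂) = X ×ˢ {1} := by
  ext ⟨a, b⟩
  simp [eq_comm]

lemma image_inr [DecidableEq G₁] [DecidableEq G₂] (X : Finset G₂) :
    X.image (MonoidHom.inr G₁ G₂) = {1} ×ˢ X := by
  ext ⟨a, b⟩
  simp [eq_comm]

lemma grpInd_product (X₁ : Finset G₁) (X₂ : Finset G₂) :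
    grpInd (X₁ ×ˢ {1}) * grpInd ({1} ×ˢ X₂) = grpInd (X₁ ×ˢ X₂) := by
  simp [grpInd, Finset.sum_mul_sum, MonoidAlgebra.single_mul_single, Finset.sum_product]

lemma disjoint_range_inl_inr :
    Disjoint (MonoidHom.inl G₁ G₂).range (MonoidHom.inr G₁ G₂).range := by
  rw [Subgroup.disjoint_def]
  rintro _ ⟨a, rfl⟩ ⟨b, hb⟩
  simp_all [Prod.ext_iff]

end Product

section Partition

variable {G : Type*} [Group G] [DecidableEq G] {parts : Finset (Finset G)}

lemma coeff_sum_smul_grpInd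
    (hdisj : ∀ X ∈ parts, ∀ Y ∈ parts, X ≠ Y → Disjoint X Y) (c : Finset G → ℤ)
    {Z : Finset G} (hZ : Z ∈ parts) {z : G} (hz : z ∈ Z) :
    (∑ W ∈ parts, c W • grpInd W).coeff z = c Z := by
  rw [MonoidAlgebra.coeff_sum, Finset.sum_apply', Finset.sum_eq_single Z]
  · rw [MonoidAlgebra.coeff_smul_apply, coeff_grpInd, if_pos hz, smul_eq_mul, mul_one]
  · intro W hW hWZ
    have hzW : z ∉ W := Finset.disjoint_right.mp (hdisj W hW Z hZ hWZ) hz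
    rw [MonoidAlgebra.coeff_smul_apply, coeff_grpInd, if_neg hzW, smul_zero]
  · exact fun h => absurd hZ h

lemma exists_eq_sum_smul_grpInd (hcover : ∀ g : G, ∃ X ∈ parts, g ∈ X)
    (hdisj : ∀ X ∈ parts, ∀ Y ∈ parts, X ≠ Y → Disjoint X Y) (a : MonoidAlgebra ℤ G)
    (ha : ∀ Z ∈ parts, ∀ z ∈ Z, ∀ z' ∈ Z, a.coeff z = a.coeff z') :
    ∃ c : Finset G → ℤ, a = ∑ Z ∈ parts, c Z • grpInd Z := by
  classical
  refine ⟨fun Z => if h : Z.Nonempty then a.coeff h.choose else 0, ?_⟩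
  ext g : 2
  obtain ⟨Z, hZ, hg⟩ := hcover g
  rw [coeff_sum_smul_grpInd hdisj _ hZ hg, dif_pos ⟨g, hg⟩]
  exact ha Z hZ g hg _ (Exists.choose_spec _)

end Partition

namespace SchurRing

variable {G : Type*} [Group G] [Fintype G] [DecidableEq G]

section

variable (A : SchurRing G)

lemma eq_of_mem_of_mem {X Y : Finset G} {g : G} (hX : X ∈ A.parts) (hY : Y ∈ A.parts)
    (hgX : g ∈ X) (hgY : g ∈ Y) : X = Y := by
  by_contra h
  exact Finset.disjoint_left.mp (A.pairwise_disjoint X hX Y hY h) hgX hgY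

lemma eq_one_of_one_mem {X : Finset G} (hX : X ∈ A.parts) (h1 : (1 : G) ∈ X) : X = {1} :=
  A.eq_of_mem_of_mem hX A.one_mem h1 (Finset.mem_singleton_self 1)

lemma sum_card_parts : ∑ X ∈ A.parts, X.card = Fintype.card G := by
  have huniv : (Finset.univ : Finset G) = A.parts.biUnion (fun X => X) := by
    ext g
    simpa using A.cover g
  rw [← Finset.card_univ, huniv, Finset.card_biUnion A.pairwise_disjoint]

lemma coeff_grpInd_mul_eq {X Y Z : Finset G} (hX : X ∈ A.parts) (hY : Y ∈ A.parts)
    (hZ : Z ∈ A.parts) {z z' : G} (hz : z ∈ Z) (hz' : z' ∈ Z) :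
    (grpInd X * grpInd Y).coeff z = (grpInd X * grpInd Y).coeff z' := by
  obtain ⟨c, hc⟩ := A.mul_mem X hX Y hY
  rw [hc, coeff_sum_smul_grpInd A.pairwise_disjoint c hZ hz,
    coeff_sum_smul_grpInd A.pairwise_disjoint c hZ hz']

end

def IsUnionOfParts (A : SchurRing G) (S : Set G) : Prop :=
  ∀ X ∈ A.parts, ∀ x ∈ X, x ∈ S → ∀ y ∈ X, y ∈ S

variable (A : SchurRing G) (K : Subgroup G) [DecidablePred (· ∈ K)]

def restrictParts : Finset (Finset K) :=
  (A.parts.filter fun X => ∀ x ∈ X, x ∈ K).image (Finset.subtype (· ∈ K))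

variable {A K}

lemma mem_restrictParts {P : Finset K} :
    P ∈ A.restrictParts K ↔ ∃ X ∈ A.parts, (∀ x ∈ X, x ∈ K) ∧ X.subtype (· ∈ K) = P := by
  simp [restrictParts, and_assoc]

lemma restrictParts_cover (hK : A.IsUnionOfParts K) (k : K) :
    ∃ P ∈ A.restrictParts K, k ∈ P := by
  obtain ⟨X, hX, hkX⟩ := A.cover k
  exact ⟨_, mem_restrictParts.mpr ⟨X, hX, hK X hX k hkX k.2, rfl⟩, by simpa using hkX⟩

lemma restrictParts_disjoint :
    ∀ P ∈ A.restrictParts K, ∀ Q ∈ A.restrictParts K, P ≠ Q → Disjoint P Q := by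
  simp only [mem_restrictParts]
  rintro _ ⟨X, hX, -, rfl⟩ _ ⟨Y, hY, -, rfl⟩ hXY
  have hd := A.pairwise_disjoint X hX Y hY fun h => hXY (h ▸ rfl)
  exact Finset.disjoint_left.mpr fun k hkX hkY =>
    Finset.disjoint_left.mp hd (Finset.mem_subtype.mp hkX) (Finset.mem_subtype.mp hkY)

variable (A K) in
def restrict (hK : A.IsUnionOfParts K) : SchurRing K where
  parts := A.restrictParts K
  nonempty_mem := by
    simp only [mem_restrictParts]
    rintro _ ⟨X, hX, hXK, rfl⟩
    obtain ⟨x, hx⟩ := A.nonempty_mem X hX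
    exact ⟨⟨x, hXK x hx⟩, Finset.mem_subtype.mpr hx⟩
  cover := restrictParts_cover hK
  pairwise_disjoint := restrictParts_disjoint
  one_mem := mem_restrictParts.mpr ⟨{1}, A.one_mem, by simp [K.one_mem], by ext; simp⟩
  inv_mem := by
    simp only [mem_restrictParts]
    rintro _ ⟨X, hX, hXK, rfl⟩
    refine ⟨X.image (·⁻¹), A.inv_mem X hX, by simpa using fun x hx => K.inv_mem (hXK x hx), ?_⟩
    ext k
    simp [inv_eq_iff_eq_inv]
  mul_mem := by
    simp only [mem_restrictParts]
    rintro _ ⟨X, hX, hXK, rfl⟩ _ ⟨Y, hY, hYK, rfl⟩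
    refine exists_eq_sum_smul_grpInd (restrictParts_cover hK) restrictParts_disjoint _ ?_
    simp only [mem_restrictParts]
    rintro _ ⟨Z, hZ, -, rfl⟩ k hk k' hk'
    rw [coeff_grpInd_subtype_mul hXK hYK, coeff_grpInd_subtype_mul hXK hYK]
    exact A.coeff_grpInd_mul_eq hX hY hZ (Finset.mem_subtype.mp hk) (Finset.mem_subtype.mp hk')

end SchurRing

namespace IsAlgIso

variable {G G' : Type*} [Group G] [Fintype G] [DecidableEq G] [Group G'] [Fintype G']
  [DecidableEq G'] {A : SchurRing G} {A' : SchurRing G'} {φ : Finset G → Finset G'}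
  (hφ : IsAlgIso A A' φ)
include hφ

lemma mapsTo {X : Finset G} (hX : X ∈ A.parts) : φ X ∈ A'.parts := hφ.1.1 hX

lemma injOn {X Y : Finset G} (hX : X ∈ A.parts) (hY : Y ∈ A.parts) (h : φ X = φ Y) : X = Y :=
  hφ.1.2.1 hX hY h

lemma exists_mem (g' : G') : ∃ Z ∈ A.parts, g' ∈ φ Z := by
  obtain ⟨Z', hZ', hg⟩ := A'.cover g'
  obtain ⟨Z, hZ, rfl⟩ := hφ.1.2.2 hZ'
  exact ⟨Z, hZ, hg⟩

lemma coeff_eq {X Y Z : Finset G} (hX : X ∈ A.parts) (hY : Y ∈ A.parts) (hZ : Z ∈ A.parts)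
    {z : G} (hz : z ∈ Z) {z' : G'} (hz' : z' ∈ φ Z) :
    (grpInd (φ X) * grpInd (φ Y)).coeff z' = (grpInd X * grpInd Y).coeff z :=
  (hφ.2 X hX Y hY Z hZ z hz z' hz').symm

lemma eq_of_mem_of_mem {Z W : Finset G} (hZ : Z ∈ A.parts) (hW : W ∈ A.parts) {g' : G'}
    (hgZ : g' ∈ φ Z) (hgW : g' ∈ φ W) : Z = W :=
  hφ.injOn hZ hW (A'.eq_of_mem_of_mem (hφ.mapsTo hZ) (hφ.mapsTo hW) hgZ hgW)

lemma grpInd_mul_eq {X Y W : Finset G} (hX : X ∈ A.parts) (hY : Y ∈ A.parts)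
    (hW : W ∈ A.parts) (h : grpInd X * grpInd Y = grpInd W) :
    grpInd (φ X) * grpInd (φ Y) = grpInd (φ W) := by
  ext g' : 2
  obtain ⟨Z, hZ, hgZ⟩ := hφ.exists_mem g'
  obtain ⟨z, hz⟩ := A.nonempty_mem Z hZ
  have hmem : z ∈ W ↔ g' ∈ φ W :=
    ⟨fun hzW => A.eq_of_mem_of_mem hZ hW hz hzW ▸ hgZ,
      fun hgW => hφ.eq_of_mem_of_mem hZ hW hgZ hgW ▸ hz⟩
  rw [hφ.coeff_eq hX hY hZ hz hgZ, h, coeff_grpInd, coeff_grpInd, if_congr hmem rfl rfl]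

lemma map_one : φ {1} = {1} :=
  eq_one_of_grpInd_mul_self (A'.nonempty_mem _ (hφ.mapsTo A.one_mem))
    (hφ.grpInd_mul_eq A.one_mem A.one_mem A.one_mem (by rw [grpInd_one, one_mul]))

lemma one_mem_map_one : (1 : G') ∈ φ {1} := by
  rw [hφ.map_one]
  exact Finset.mem_singleton_self 1

lemma coeff_grpInd_mul_image_inv_one {X : Finset G} (hX : X ∈ A.parts) :
    (grpInd (φ X) * grpInd (φ (X.image (·⁻¹)))).coeff 1 = X.card := by
  rw [hφ.coeff_eq hX (A.inv_mem X hX) A.one_mem (Finset.mem_singleton_self 1)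
    hφ.one_mem_map_one, _root_.coeff_grpInd_mul_image_inv_one]

lemma map_inv {X : Finset G} (hX : X ∈ A.parts) :
    φ (X.image (·⁻¹)) = (φ X).image (·⁻¹) := by
  have hpos : 0 < (grpInd (φ X) * grpInd (φ (X.image (·⁻¹)))).coeff 1 := by
    rw [hφ.coeff_grpInd_mul_image_inv_one hX]
    exact_mod_cast (A.nonempty_mem X hX).card_pos
  obtain ⟨a, ha, b, hb, hab⟩ := Finset.mem_mul.mp ((coeff_grpInd_mul_pos_iff _ _ _).mp hpos)
  have hbinv : b ∈ (φ X).image (·⁻¹) :=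
    Finset.mem_image.mpr ⟨a, ha, (eq_inv_of_mul_eq_one_right hab).symm⟩
  exact A'.eq_of_mem_of_mem (hφ.mapsTo (A.inv_mem X hX)) (A'.inv_mem _ (hφ.mapsTo hX)) hb hbinv

lemma card_map {X : Finset G} (hX : X ∈ A.parts) : (φ X).card = X.card := by
  have h := hφ.coeff_grpInd_mul_image_inv_one hX
  rw [hφ.map_inv hX, _root_.coeff_grpInd_mul_image_inv_one] at h
  exact_mod_cast h

lemma card_eq : Fintype.card G' = Fintype.card G := by
  have hparts : A'.parts = A.parts.image φ := by
    ext Z'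
    refine ⟨fun hZ' => ?_, ?_⟩
    · obtain ⟨Z, hZ, rfl⟩ := hφ.1.2.2 hZ'
      exact Finset.mem_image_of_mem φ hZ
    · rw [Finset.mem_image]
      rintro ⟨Z, hZ, rfl⟩
      exact hφ.mapsTo hZ
  rw [← A'.sum_card_parts, ← A.sum_card_parts, hparts,
    Finset.sum_image fun X hX Y hY h => hφ.injOn hX hY h]
  exact Finset.sum_congr rfl fun X hX => hφ.card_map hX

end IsAlgIso

section Embedding

variable {H G G' : Type*} [Group H] [Fintype H] [DecidableEq H] [Group G] [Fintype G]
  [DecidableEq G] [Group G'] [Fintype G'] [DecidableEq G']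
  {A : SchurRing H} {B : SchurRing G} {A' : SchurRing G'} {ι : H →* G}
  {φ : Finset G → Finset G'}

lemma SchurRing.exists_eq_image_of_mem (hAB : ∀ X ∈ A.parts, X.image ι ∈ B.parts)
    {Z : Finset G} (hZ : Z ∈ B.parts) {h : H} (hh : ι h ∈ Z) : ∃ W ∈ A.parts, Z = W.image ι := by
  obtain ⟨W, hW, hhW⟩ := A.cover h
  exact ⟨W, hW, B.eq_of_mem_of_mem hZ (hAB W hW) hh (Finset.mem_image_of_mem ι hhW)⟩

def IsAlgIso.imageSubgroup (hφ : IsAlgIso B A' φ) (hAB : ∀ X ∈ A.parts, X.image ι ∈ B.parts) :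
    Subgroup G' where
  carrier := {g' | ∃ X ∈ A.parts, g' ∈ φ (X.image ι)}
  one_mem' := ⟨{1}, A.one_mem, by simpa using hφ.one_mem_map_one⟩
  mul_mem' := by
    rintro a b ⟨X, hX, ha⟩ ⟨Y, hY, hb⟩
    obtain ⟨Z, hZ, habZ⟩ := hφ.exists_mem (a * b)
    obtain ⟨z, hz⟩ := B.nonempty_mem Z hZ
    -- the structure constant at `Z` is positive, so `Z` meets `ι X * ι Y ⊆ range ι`
    have hpos := (coeff_grpInd_mul_pos_iff _ _ _).mpr (Finset.mul_mem_mul ha hb)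
    rw [hφ.coeff_eq (hAB X hX) (hAB Y hY) hZ hz habZ, coeff_grpInd_mul_pos_iff] at hpos
    obtain ⟨_, hx, _, hy, rfl⟩ := Finset.mem_mul.mp hpos
    obtain ⟨x, -, rfl⟩ := Finset.mem_image.mp hx
    obtain ⟨y, -, rfl⟩ := Finset.mem_image.mp hy
    obtain ⟨W, hW, rfl⟩ := SchurRing.exists_eq_image_of_mem hAB hZ (h := x * y) (by simpa)
    exact ⟨W, hW, habZ⟩
  inv_mem' := by
    rintro a ⟨X, hX, ha⟩
    refine ⟨X.image (·⁻¹), A.inv_mem X hX, ?_⟩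
    rw [image_inv_image ι, hφ.map_inv (hAB X hX)]
    exact Finset.mem_image_of_mem _ ha

namespace IsAlgIso

variable (hφ : IsAlgIso B A' φ) (hAB : ∀ X ∈ A.parts, X.image ι ∈ B.parts)
include hφ

lemma isUnionOfParts_imageSubgroup : A'.IsUnionOfParts (hφ.imageSubgroup hAB) := by
  rintro P hP x hxP ⟨X, hX, hxX⟩ y hyP
  exact ⟨X, hX, A'.eq_of_mem_of_mem hP (hφ.mapsTo (hAB X hX)) hxP hxX ▸ hyP⟩

lemma isAlgIso_restrict_imageSubgroup (hι : Function.Injective ι)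
    [DecidablePred (· ∈ hφ.imageSubgroup hAB)] :
    IsAlgIso A (A'.restrict _ (hφ.isUnionOfParts_imageSubgroup hAB))
      (fun X => (φ (X.image ι)).subtype (· ∈ hφ.imageSubgroup hAB)) := by
  have hφK : ∀ X ∈ A.parts, ∀ x ∈ φ (X.image ι), x ∈ hφ.imageSubgroup hAB :=
    fun X hX x hx => ⟨X, hX, hx⟩
  refine ⟨⟨fun X hX => ?_, fun X hX Y hY hXY => ?_, fun P hP => ?_⟩, ?_⟩
  · exact SchurRing.mem_restrictParts.mpr ⟨_, hφ.mapsTo (hAB X hX), hφK X hX, rfl⟩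
  · have h := congrArg (Finset.map (Function.Embedding.subtype _)) hXY
    rw [Finset.subtype_map_of_mem (hφK X hX), Finset.subtype_map_of_mem (hφK Y hY)] at h
    exact Finset.image_injective hι (hφ.injOn (hAB X hX) (hAB Y hY) h)
  · obtain ⟨Q, hQ, hQK, rfl⟩ := SchurRing.mem_restrictParts.mp hP
    obtain ⟨q, hq⟩ := A'.nonempty_mem Q hQ
    obtain ⟨X, hX, hqX⟩ := hQK q hq
    exact ⟨X, hX, by rw [A'.eq_of_mem_of_mem hQ (hφ.mapsTo (hAB X hX)) hq hqX]⟩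
  · intro X hX Y hY Z hZ z hz k hk
    dsimp only at hk ⊢
    rw [coeff_grpInd_subtype_mul (hφK X hX) (hφK Y hY),
      hφ.coeff_eq (hAB X hX) (hAB Y hY) (hAB Z hZ) (Finset.mem_image_of_mem ι hz)
        (Finset.mem_subtype.mp hk), coeff_grpInd_image_mul hι]

end IsAlgIso

end Embedding

theorem SchurRing.IsSeparableAbelian.exists_comb_embedding {H G G' : Type} [CommGroup H]
    [Fintype H] [DecidableEq H] [Group G] [Fintype G] [DecidableEq G] [CommGroup G']
    [Fintype G'] [DecidableEq G'] {A : SchurRing H} {B : SchurRing G} {A' : SchurRing G'}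
    {ι : H →* G} {φ : Finset G → Finset G'} (hA : A.IsSeparableAbelian)
    (hφ : IsAlgIso B A' φ) (hι : Function.Injective ι)
    (hAB : ∀ X ∈ A.parts, X.image ι ∈ B.parts) :
    ∃ f : H → G', Function.Injective f ∧ (∀ a, f a ∈ hφ.imageSubgroup hAB) ∧
      ∀ X ∈ A.parts, φ (X.image ι) = X.image f ∧
        ∀ g h : H, h * g⁻¹ ∈ X ↔ f h * (f g)⁻¹ ∈ X.image f := by
  classical
  obtain ⟨f, ⟨hf, hcay⟩, himg⟩ := hA _ _ _ (hφ.isAlgIso_restrict_imageSubgroup hAB hι)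
  have hφf : ∀ X ∈ A.parts, φ (X.image ι) = (X.image f).map (Function.Embedding.subtype _) :=
    fun X hX => by
      rw [← himg X hX, Finset.subtype_map_of_mem fun x hx => ⟨X, hX, hx⟩]
  refine ⟨Subtype.val ∘ f, Subtype.val_injective.comp hf.1, fun a => (f a).2, fun X hX =>
    ⟨by rw [hφf X hX, Finset.map_eq_image, Finset.image_image]; rfl, fun g h => ?_⟩⟩
  rw [(hcay X hX).2 g h, ← Finset.image_image, Function.comp_apply, Function.comp_apply,
    ← Subgroup.coe_inv, ← Subgroup.coe_mul, Subtype.val_injective.mem_finset_image]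

lemma IsAlgIso.disjoint_imageSubgroup {H₁ H₂ G G' : Type*} [Group H₁] [Fintype H₁]
    [DecidableEq H₁] [Group H₂] [Fintype H₂] [DecidableEq H₂] [Group G] [Fintype G]
    [DecidableEq G] [Group G'] [Fintype G'] [DecidableEq G'] {A₁ : SchurRing H₁}
    {A₂ : SchurRing H₂} {B : SchurRing G} {A' : SchurRing G'} {ι₁ : H₁ →* G} {ι₂ : H₂ →* G}
    {φ : Finset G → Finset G'} (hφ : IsAlgIso B A' φ)
    (hAB₁ : ∀ X ∈ A₁.parts, X.image ι₁ ∈ B.parts) (hAB₂ : ∀ X ∈ A₂.parts, X.image ι₂ ∈ B.parts)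
    (hι : Disjoint ι₁.range ι₂.range) :
    Disjoint (hφ.imageSubgroup hAB₁) (hφ.imageSubgroup hAB₂) := by
  rw [Subgroup.disjoint_def]
  rintro x ⟨X, hX, hxX⟩ ⟨Y, hY, hxY⟩
  have hXY := hφ.eq_of_mem_of_mem (hAB₁ X hX) (hAB₂ Y hY) hxX hxY
  obtain ⟨x₀, hx₀⟩ := A₁.nonempty_mem X hX
  have hmem : ι₁ x₀ ∈ Y.image ι₂ := hXY ▸ Finset.mem_image_of_mem ι₁ hx₀
  obtain ⟨y₀, -, hy₀⟩ := Finset.mem_image.mp hmem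
  have h1 : ι₁ x₀ = 1 := Subgroup.disjoint_def.mp hι ⟨x₀, rfl⟩ ⟨y₀, hy₀⟩
  rw [B.eq_one_of_one_mem (hAB₁ X hX) (h1 ▸ Finset.mem_image_of_mem ι₁ hx₀), hφ.map_one] at hxX
  exact Finset.mem_singleton.mp hxX

lemma IsAlgIso.map_product {G₁ G₂ G' : Type*} [Group G₁] [Fintype G₁] [DecidableEq G₁]
    [Group G₂] [Fintype G₂] [DecidableEq G₂] [Group G'] [Fintype G'] [DecidableEq G']
    {B : SchurRing (G₁ × G₂)} {A' : SchurRing G'} {φ : Finset (G₁ × G₂) → Finset G'}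
    (hφ : IsAlgIso B A' φ) {X₁ : Finset G₁} {X₂ : Finset G₂} (h₁ : X₁ ×ˢ {1} ∈ B.parts)
    (h₂ : {1} ×ˢ X₂ ∈ B.parts) (h : X₁ ×ˢ X₂ ∈ B.parts) :
    φ (X₁ ×ˢ X₂) = φ (X₁ ×ˢ {1}) * φ ({1} ×ˢ X₂) :=
  (mul_eq_of_grpInd_mul_eq (hφ.grpInd_mul_eq h₁ h₂ h (grpInd_product X₁ X₂))).symm

/-- the tensor product of two separable S-rings over finite abelian groups is
separable with respect to the class of abelian groups. -/
theorem stmt15 {G₁ G₂ : Type} [CommGroup G₁] [Fintype G₁] [DecidableEq G₁]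
    [CommGroup G₂] [Fintype G₂] [DecidableEq G₂]
    (A₁ : SchurRing G₁) (A₂ : SchurRing G₂)
    (h₁ : A₁.IsSeparableAbelian) (h₂ : A₂.IsSeparableAbelian)
    (B : SchurRing (G₁ × G₂))
    (hB : ∀ X : Finset (G₁ × G₂), X ∈ B.parts ↔
      ∃ X₁ ∈ A₁.parts, ∃ X₂ ∈ A₂.parts, X = X₁ ×ˢ X₂) :
    B.IsSeparableAbelian := by
  intro G' _ _ _ A' φ hφ
  have hB₁ : ∀ X ∈ A₁.parts, X.image (MonoidHom.inl G₁ G₂) ∈ B.parts := fun X hX =>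
    (hB _).mpr ⟨X, hX, {1}, A₂.one_mem, image_inl X⟩
  have hB₂ : ∀ X ∈ A₂.parts, X.image (MonoidHom.inr G₁ G₂) ∈ B.parts := fun X hX =>
    (hB _).mpr ⟨{1}, A₁.one_mem, X, hX, image_inr X⟩
  obtain ⟨f₁, hf₁, hK₁, hφ₁⟩ :=
    h₁.exists_comb_embedding hφ (fun _ _ h => congrArg Prod.fst h) hB₁
  obtain ⟨f₂, hf₂, hK₂, hφ₂⟩ :=
    h₂.exists_comb_embedding hφ (fun _ _ h => congrArg Prod.snd h) hB₂
  have hK := hφ.disjoint_imageSubgroup hB₁ hB₂ disjoint_range_inl_inr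
  have hφX : ∀ X₁ ∈ A₁.parts, ∀ X₂ ∈ A₂.parts, φ (X₁ ×ˢ X₂) = X₁.image f₁ * X₂.image f₂ :=
    fun X₁ hX₁ X₂ hX₂ => by
      rw [← (hφ₁ X₁ hX₁).1, ← (hφ₂ X₂ hX₂).1, image_inl, image_inr, hφ.map_product
        ((hB _).mpr ⟨X₁, hX₁, {1}, A₂.one_mem, rfl⟩) ((hB _).mpr ⟨{1}, A₁.one_mem, X₂, hX₂, rfl⟩)
        ((hB _).mpr ⟨X₁, hX₁, X₂, hX₂, rfl⟩)]
  refine ⟨fun p => f₁ p.1 * f₂ p.2, ⟨(Fintype.bijective_iff_injective_and_card _).mpr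
    ⟨injective_mul_of_disjoint hK hf₁ hf₂ hK₁ hK₂, hφ.card_eq.symm⟩, fun X hX => ?_⟩,
    fun X hX => ?_⟩ <;> obtain ⟨X₁, hX₁, X₂, hX₂, rfl⟩ := (hB X).mp hX <;> rw [image_product_mul]
  · exact ⟨hφX X₁ hX₁ X₂ hX₂ ▸ hφ.mapsTo hX,
      mul_inv_mem_product_iff hK hK₁ hK₂ (hφ₁ X₁ hX₁).2 (hφ₂ X₂ hX₂).2⟩
  · exact hφX X₁ hX₁ X₂ hX₂
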